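/- arXiv:2011.08104 — 3 statements merged into one kernel-verified Lean document; each statement's English description precedes it below -/
import Mathlib

section
/- Fix α > 0 and, for n ∈ ℕ, define ψ_n(u,v,φ) = (n!/((2α)_n Γ(α))) Σ_{k=0}^{⌊n/2⌋} (−1)^k 2^{n−2k} Γ(n−k+α)/(k!(n−2k)!) · (u − v cos φ)^{n−2k} · (u² + v² − 2uv cos φ)^{k}. Then for every integer n ≥ 1 and all u, v ∈ ℝ and φ ∈ [0, π], the partial derivative of ψ_n with respect to u satisfies ∂_u ψ_n(u,v,φ) = n · ψ_{n−1}(u,v,φ). -/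
open MeasureTheory Real Set
open scoped ENNReal

noncomputable section

namespace Paper

/-- The normalized Bessel function of index `α`:
`j_α(z) = Γ(α+1) Σ_{k} (−1)^k/(k! Γ(α+k+1)) (z/2)^{2k}`. -/
def besselJ (α : ℝ) (z : ℝ) : ℝ :=
  Real.Gamma (α + 1) *
    ∑' k : ℕ, (-1 : ℝ) ^ k / ((k.factorial : ℝ) * Real.Gamma (α + k + 1)) * (z / 2) ^ (2 * k)

/-- The Gegenbauer polynomial
`C_m^α(t) = (1/Γ(α)) Σ_{k=0}^{⌊m/2⌋} (−1)^k Γ(m−k+α)/(k!(m−2k)!) (2t)^{m−2k}`. -/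
def gegenbauer (α : ℝ) (m : ℕ) (t : ℝ) : ℝ :=
  (1 / Real.Gamma α) *
    ∑ k ∈ Finset.range (m / 2 + 1),
      (-1 : ℝ) ^ k * Real.Gamma (((m - k : ℕ) : ℝ) + α) /
          ((k.factorial : ℝ) * ((m - 2 * k).factorial : ℝ)) * (2 * t) ^ (m - 2 * k)

/-- The Pochhammer symbol `(a)_m = Γ(a+m)/Γ(a)`. -/
def poch (a : ℝ) (m : ℕ) : ℝ := Real.Gamma (a + m) / Real.Gamma a

/-- The constant `C_α = Γ(α+1)/(√π Γ(α+1/2))`. -/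
def Cconst (α : ℝ) : ℝ := Real.Gamma (α + 1) / (Real.sqrt π * Real.Gamma (α + 1 / 2))

/-- `δ(u,v,φ) = √(u² + v² − 2uv cos φ)`. -/
def del (u v φ : ℝ) : ℝ := Real.sqrt (u ^ 2 + v ^ 2 - 2 * u * v * Real.cos φ)

/-- `ψ_n(u,v,φ)`, the polynomial expression of
`(n!/(2α)_n) δ^n C_n^α((u − v cos φ)/δ)` with `δ = √(u²+v²−2uv cos φ)`. -/
def psiN (α : ℝ) (n : ℕ) (u v φ : ℝ) : ℝ :=
  ((n.factorial : ℝ) / (poch (2 * α) n * Real.Gamma α)) *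
    ∑ k ∈ Finset.range (n / 2 + 1),
      (-1 : ℝ) ^ k * 2 ^ (n - 2 * k) * Real.Gamma (((n - k : ℕ) : ℝ) + α) /
          ((k.factorial : ℝ) * ((n - 2 * k).factorial : ℝ)) *
          (u - v * Real.cos φ) ^ (n - 2 * k) *
          (u ^ 2 + v ^ 2 - 2 * u * v * Real.cos φ) ^ k

/-- The Bessel product kernel `K_B^α(u,v,w)`. -/
def besselKernel (α : ℝ) (u v w : ℝ) : ℝ :=
  if |u - v| ≤ w ∧ w ≤ u + v then
    (2 : ℝ) ^ (-2 * α + 1) * Cconst α *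
      ((((u + v) ^ 2 - w ^ 2) * (w ^ 2 - (u - v) ^ 2)) ^ (α - 1 / 2)) / (u * v * w) ^ (2 * α)
  else 0

/-- The constant `M_{κ,n} = 2 (2/n)^{κn−n/2} Γ(κn+1−n/2)`. -/
def Mconst (κ : ℝ) (n : ℕ) : ℝ :=
  2 * (2 / (n : ℝ)) ^ (κ * n - (n : ℝ) / 2) * Real.Gamma (κ * n + 1 - (n : ℝ) / 2)

/-- The measure `dμ_{κ,n}(x) = M_{κ,n}⁻¹ |x|^{2κ+2/n−2} dx` on `ℝ`. -/
def mu (κ : ℝ) (n : ℕ) : Measure ℝ :=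
  volume.withDensity fun x => ENNReal.ofReal ((Mconst κ n)⁻¹ * |x| ^ (2 * κ + 2 / (n : ℝ) - 2))

/-- The generalized Hankel function `B_λ^{κ,n}(x)`. -/
def genHankel (κ : ℝ) (n : ℕ) (lam x : ℝ) : ℂ :=
  ((besselJ (κ * n - (n : ℝ) / 2) ((n : ℝ) * |lam * x| ^ (1 / (n : ℝ))) : ℝ) : ℂ) +
    (-Complex.I) ^ n * ((n : ℂ) / 2) ^ n *
      ((Real.Gamma (κ * n - (n : ℝ) / 2 + 1) / Real.Gamma (κ * n + (n : ℝ) / 2 + 1) : ℝ) : ℂ) *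
      ((lam * x : ℝ) : ℂ) *
      ((besselJ (κ * n + (n : ℝ) / 2) ((n : ℝ) * |lam * x| ^ (1 / (n : ℝ))) : ℝ) : ℂ)

/-- The even part `B^{κ,n}_{λ,e}(x) = j_{κn−n/2}(n|λx|^{1/n})`. -/
def genHankelEven (κ : ℝ) (n : ℕ) (lam x : ℝ) : ℝ :=
  besselJ (κ * n - (n : ℝ) / 2) ((n : ℝ) * |lam * x| ^ (1 / (n : ℝ)))

/-- The odd part `B^{κ,n}_{λ,o}(x) = (n/2)^n (−i)^n λx/(κn−n/2+1)_n · j_{κn+n/2}(n|λx|^{1/n})`. -/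
def genHankelOdd (κ : ℝ) (n : ℕ) (lam x : ℝ) : ℂ :=
  ((n : ℂ) / 2) ^ n * (-Complex.I) ^ n * ((lam * x : ℝ) : ℂ) /
      ((poch (κ * n - (n : ℝ) / 2 + 1) n : ℝ) : ℂ) *
    ((besselJ (κ * n + (n : ℝ) / 2) ((n : ℝ) * |lam * x| ^ (1 / (n : ℝ))) : ℝ) : ℂ)

/-- `σ^n_{x,y,z} = (|x|^{2/n} + |y|^{2/n} − |z|^{2/n})/(2|xy|^{1/n})`. -/
def sigmaP (n : ℕ) (x y z : ℝ) : ℝ :=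
  (|x| ^ (2 / (n : ℝ)) + |y| ^ (2 / (n : ℝ)) - |z| ^ (2 / (n : ℝ))) /
    (2 * |x * y| ^ (1 / (n : ℝ)))

/-- `ξ_{κ,n}(x,y,z) = (n! sgn(xy)/(2κn−n)_n) C_n^{κn−n/2}(σ^n_{x,y,z})`. -/
def xiP (κ : ℝ) (n : ℕ) (x y z : ℝ) : ℝ :=
  (n.factorial : ℝ) * Real.sign (x * y) / poch (2 * κ * n - n) n *
    gegenbauer (κ * n - (n : ℝ) / 2) n (sigmaP n x y z)

/-- The kernel `𝒦_{κ,n}(x,y,z)`. -/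
def Kcal (κ : ℝ) (n : ℕ) (x y z : ℝ) : ℝ :=
  Mconst κ n / (2 * n) *
    besselKernel (κ * n - (n : ℝ) / 2) (|x| ^ (1 / (n : ℝ))) (|y| ^ (1 / (n : ℝ)))
      (|z| ^ (1 / (n : ℝ))) *
    (1 + (-1 : ℝ) ^ n * xiP κ n x y z + xiP κ n z x y + xiP κ n y z x)

/-- The generalized translation operator `τ_x^{κ,n} f(y) = ∫ f(z) dν^{κ,n}_{x,y}(z)`,
where `dν^{κ,n}_{x,y} = 𝒦_{κ,n}(x,y,·) dμ_{κ,n}` if `xy ≠ 0`, `ν_{x,0} = δ_x`, `ν_{0,y} = δ_y`. -/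
def tau (κ : ℝ) (n : ℕ) (x : ℝ) (f : ℝ → ℂ) (y : ℝ) : ℂ :=
  if x = 0 then f y
  else if y = 0 then f x
  else ∫ z, f z * ((Kcal κ n x y z : ℝ) : ℂ) ∂(mu κ n)

/-- The generalized convolution `f ⋆_{κ,n} g(x) = ∫ f(y) τ_x^{κ,n} g((−1)^n y) dμ_{κ,n}(y)`. -/
def conv (κ : ℝ) (n : ℕ) (f g : ℝ → ℂ) (x : ℝ) : ℂ :=
  ∫ y, f y * tau κ n x g ((-1) ^ n * y) ∂(mu κ n)

/-- The generalized Hankel transform `ℱ_{κ,n} f(λ) = ∫ f(x) B_λ^{κ,n}(x) dμ_{κ,n}(x)`. -/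
def Fkn (κ : ℝ) (n : ℕ) (f : ℝ → ℂ) (lam : ℝ) : ℂ :=
  ∫ x, f x * genHankel κ n lam x ∂(mu κ n)

/-- The Hankel transform of order `α`:
`ℋ_α(f)(λ) = (1/(2^{α−1} Γ(α+1))) ∫_0^∞ f(t) j_α(tλ) t^{2α+1} dt`. -/
def HankelT (α : ℝ) (f : ℝ → ℂ) (lam : ℝ) : ℂ :=
  ((1 / ((2 : ℝ) ^ (α - 1) * Real.Gamma (α + 1)) : ℝ) : ℂ) *
    ∫ t in Ioi (0 : ℝ), f t * ((besselJ α (t * lam) * t ^ (2 * α + 1) : ℝ) : ℂ)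

/-- The differential–reflection operator
`T^{κ,n} f(x) = |x|^{2(1−1/n)} [ f''(x) + (2κ/x) f'(x) − (κ/x²)(f(x) − f(−x)) ]`. -/
def Top (κ : ℝ) (n : ℕ) (f : ℝ → ℂ) (x : ℝ) : ℂ :=
  ((|x| ^ (2 * (1 - 1 / (n : ℝ))) : ℝ) : ℂ) *
    (deriv (deriv f) x + ((2 * κ / x : ℝ) : ℂ) * deriv f x -
      ((κ / x ^ 2 : ℝ) : ℂ) * (f x - f (-x)))

/-! With `X = u - v cos φ` and `Q = u² + v² - 2uv cos φ` one has `∂_u X = 1` and `∂_u Q = 2X`, so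
`∂_u (X^j Q^k) = j X^(j-1) Q^k + 2k X^(j+1) Q^(k-1)`. Collecting the coefficient of `X^j Q^k` in
`∂_u ψ_(n+1)`, the claim becomes a three-term identity between the coefficients of `ψ_(n+1)` and
`ψ_n`, which is `Γ(s+1) = s Γ(s)`; the normalising constants contribute
`(2α)_(n+1) = (2α + n) (2α)_n`. -/

theorem sum_range_succ_add_shift {M : Type*} [AddCommMonoid M] (g h : ℕ → M) (N : ℕ) :
    ∑ k ∈ Finset.range (N + 1), (g k + h k) =
      ∑ k ∈ Finset.range N, (g k + h (k + 1)) + g N + h 0 := by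
  rw [Finset.sum_add_distrib, Finset.sum_add_distrib, Finset.sum_range_succ g,
    Finset.sum_range_succ' h]
  abel

theorem poch_pos {a : ℝ} (ha : 0 < a) (n : ℕ) : 0 < poch a n :=
  div_pos (Real.Gamma_pos_of_pos (by positivity)) (Real.Gamma_pos_of_pos ha)

theorem poch_succ {a : ℝ} (n : ℕ) (h : a + n ≠ 0) : poch a (n + 1) = (a + n) * poch a n := by
  unfold poch
  push_cast
  rw [← add_assoc, Real.Gamma_add_one h, mul_div_assoc]

/-- The coefficient of `X ^ j * Q ^ k` in `ψ_n`, `n = 2k + j`, without the factor `n!/((2α)_n Γ(α))`. -/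
def psiCoeff (α : ℝ) (k j : ℕ) : ℝ :=
  (-1 : ℝ) ^ k * 2 ^ j * Real.Gamma (((k + j : ℕ) : ℝ) + α) /
    ((k.factorial : ℝ) * (j.factorial : ℝ))

def psiPoly (α : ℝ) (n : ℕ) (X Q : ℝ) : ℝ :=
  (n.factorial : ℝ) / (poch (2 * α) n * Real.Gamma α) *
    ∑ k ∈ Finset.range (n / 2 + 1), psiCoeff α k (n - 2 * k) * X ^ (n - 2 * k) * Q ^ k

theorem psiN_eq_psiPoly (α : ℝ) (n : ℕ) (u v φ : ℝ) :
    psiN α n u v φ = psiPoly α n (u - v * cos φ) (u ^ 2 + v ^ 2 - 2 * u * v * cos φ) := by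
  unfold psiN psiPoly psiCoeff
  congr 1
  refine Finset.sum_congr rfl fun k hk => ?_
  rw [show k + (n - 2 * k) = n - k by have := Finset.mem_range.mp hk; omega]

theorem psiCoeff_one {α : ℝ} (hα : 0 < α) (k : ℕ) :
    psiCoeff α k 1 = (2 * α + 2 * k) * psiCoeff α k 0 := by
  unfold psiCoeff
  rw [show ((k + 1 : ℕ) : ℝ) + α = ((k + 0 : ℕ) : ℝ) + α + 1 by push_cast; ring,
    Real.Gamma_add_one (by positivity)]
  push_cast
  field_simp
  ring

theorem psiCoeff_recurrence {α : ℝ} (hα : 0 < α) (k j : ℕ) :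
    (j + 2) * psiCoeff α k (j + 2) + 2 * (k + 1) * psiCoeff α (k + 1) j =
      (2 * α + (2 * k + j + 1)) * psiCoeff α k (j + 1) := by
  unfold psiCoeff
  rw [show ((k + (j + 2) : ℕ) : ℝ) + α = ((k + (j + 1) : ℕ) : ℝ) + α + 1 by push_cast; ring,
    show ((k + 1 + j : ℕ) : ℝ) + α = ((k + (j + 1) : ℕ) : ℝ) + α by push_cast; ring,
    Real.Gamma_add_one (by positivity)]
  simp only [Nat.factorial_succ]
  push_cast
  field_simp
  ring

theorem sum_psiCoeff_deriv {α : ℝ} (hα : 0 < α) (n : ℕ) (X Q : ℝ) :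
    ∑ k ∈ Finset.range ((n + 1) / 2 + 1), psiCoeff α k (n + 1 - 2 * k) *
        (((n + 1 - 2 * k : ℕ) : ℝ) * X ^ (n + 1 - 2 * k - 1) * Q ^ k +
          2 * k * X ^ (n + 1 - 2 * k + 1) * Q ^ (k - 1)) =
      (2 * α + n) *
        ∑ k ∈ Finset.range (n / 2 + 1), psiCoeff α k (n - 2 * k) * X ^ (n - 2 * k) * Q ^ k := by
  set g : ℕ → ℝ := fun k => psiCoeff α k (n + 1 - 2 * k) *
    (((n + 1 - 2 * k : ℕ) : ℝ) * X ^ (n + 1 - 2 * k - 1) * Q ^ k)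
  set h : ℕ → ℝ := fun k => psiCoeff α k (n + 1 - 2 * k) *
    (2 * k * X ^ (n + 1 - 2 * k + 1) * Q ^ (k - 1))
  have h_zero : h 0 = 0 := by simp [h]
  have hpair : ∀ k, 2 * k + 1 ≤ n →
      g k + h (k + 1) = (2 * α + n) * (psiCoeff α k (n - 2 * k) * X ^ (n - 2 * k) * Q ^ k) := by
    intro k hk
    obtain ⟨j, rfl⟩ : ∃ j, n = 2 * k + j + 1 := ⟨n - 2 * k - 1, by omega⟩
    simp only [g, h, show 2 * k + j + 1 + 1 - 2 * k = j + 2 by omega,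
      show 2 * k + j + 1 + 1 - 2 * (k + 1) = j by omega,
      show 2 * k + j + 1 - 2 * k = j + 1 by omega,
      show j + 2 - 1 = j + 1 by omega, Nat.add_sub_cancel]
    push_cast
    linear_combination (X ^ (j + 1) * Q ^ k) * psiCoeff_recurrence hα k j
  simp_rw [mul_add]
  rw [sum_range_succ_add_shift g h, h_zero, add_zero, Finset.mul_sum]
  -- The unpaired top index `k = (n + 1) / 2` is `psiCoeff_one` for odd `n + 1`, zero for even.
  rcases Nat.even_or_odd' n with ⟨s, rfl | rfl⟩
  · rw [show (2 * s + 1) / 2 = s by omega, show 2 * s / 2 = s by omega, Finset.sum_range_succ]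
    congr 1
    · exact Finset.sum_congr rfl fun k hk => hpair k (by have := Finset.mem_range.mp hk; omega)
    · simp only [g, show 2 * s + 1 - 2 * s = 1 by omega, Nat.sub_self, psiCoeff_one hα]
      push_cast
      ring
  · rw [show (2 * s + 1 + 1) / 2 = s + 1 by omega, show (2 * s + 1) / 2 = s by omega]
    have g_top : g (s + 1) = 0 := by simp [g, show 2 * s + 1 + 1 - 2 * (s + 1) = 0 by omega]
    rw [g_top, add_zero]
    exact Finset.sum_congr rfl fun k hk => hpair k (by have := Finset.mem_range.mp hk; omega)

theorem hasDerivAt_pow_mul_pow {X Q : ℝ → ℝ} {u : ℝ} (hX : HasDerivAt X 1 u)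
    (hQ : HasDerivAt Q (2 * X u) u) (j k : ℕ) :
    HasDerivAt (fun w => X w ^ j * Q w ^ k)
      (j * X u ^ (j - 1) * Q u ^ k + 2 * k * X u ^ (j + 1) * Q u ^ (k - 1)) u :=
  ((hX.pow j).mul (hQ.pow k)).congr_deriv (by simp only [Pi.pow_apply]; ring)

theorem hasDerivAt_psiPoly_comp {α : ℝ} (hα : 0 < α) {X Q : ℝ → ℝ} {u : ℝ}
    (hX : HasDerivAt X 1 u) (hQ : HasDerivAt Q (2 * X u) u) (n : ℕ) :
    HasDerivAt (fun w => psiPoly α n (X w) (Q w)) (n * psiPoly α (n - 1) (X u) (Q u)) u := by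
  cases n with
  | zero => simpa [psiPoly] using hasDerivAt_const u _
  | succ n =>
    have hsum := (HasDerivAt.fun_sum (u := Finset.range ((n + 1) / 2 + 1)) fun k _ =>
      (hasDerivAt_pow_mul_pow hX hQ (n + 1 - 2 * k) k).const_mul
        (psiCoeff α k (n + 1 - 2 * k))).const_mul
      (((n + 1).factorial : ℝ) / (poch (2 * α) (n + 1) * Real.Gamma α))
    simp only [← mul_assoc] at hsum
    refine hsum.congr_deriv ?_
    rw [sum_psiCoeff_deriv hα, psiPoly, Nat.add_sub_cancel,
      poch_succ n (by positivity), Nat.factorial_succ]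
    have hpoch := (poch_pos (by positivity : 0 < 2 * α) n).ne'
    have hGamma := (Real.Gamma_pos_of_pos hα).ne'
    have hshift : 2 * α + n ≠ 0 := by positivity
    push_cast
    field_simp

theorem statement2_general (α : ℝ) (hα : 0 < α) (n : ℕ) (u v φ : ℝ) :
    HasDerivAt (fun u => psiN α n u v φ) ((n : ℝ) * psiN α (n - 1) u v φ) u := by
  have hX : HasDerivAt (fun w => w - v * cos φ) 1 u := (hasDerivAt_id u).sub_const _
  have hQ : HasDerivAt (fun w => w ^ 2 + v ^ 2 - 2 * w * v * cos φ) (2 * (u - v * cos φ)) u :=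
    (((hasDerivAt_pow 2 u).add_const (v ^ 2)).sub
      ((((hasDerivAt_id u).const_mul 2).mul_const v).mul_const (cos φ))).congr_deriv (by ring)
  simp only [psiN_eq_psiPoly]
  exact hasDerivAt_psiPoly_comp hα hX hQ n

/-- `∂_u ψ_n(u,v,φ) = n ψ_{n−1}(u,v,φ)`. -/
theorem statement2 (α : ℝ) (hα : 0 < α) (n : ℕ) (hn : 1 ≤ n) (u v φ : ℝ)
    (hφ : φ ∈ Set.Icc (0 : ℝ) π) :
    HasDerivAt (fun u => psiN α n u v φ) ((n : ℝ) * psiN α (n - 1) u v φ) u :=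
  statement2_general α hα n u v φ

end Paper
end
end

section
/- Let n ∈ ℕ* and κ > (n−1)/(2n). For all x, y, z ∈ ℝ∖{0}, the kernel 𝒦_{κ,n} satisfies the symmetry relations: 𝒦_{κ,n}(x,y,z) = 𝒦_{κ,n}(y,x,z), 𝒦_{κ,n}(x,y,z) = 𝒦_{κ,n}((−1)^n x, z, y), and 𝒦_{κ,n}(x,y,z) = 𝒦_{κ,n}(z, (−1)^n y, x). -/
open MeasureTheory Real Set
open scoped ENNReal

noncomputable section

namespace Paper

lemma bk_swap12 (α u v w : ℝ) : besselKernel α u v w = besselKernel α v u w := by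
  unfold besselKernel
  have hc : (|u - v| ≤ w ∧ w ≤ u + v) ↔ (|v - u| ≤ w ∧ w ≤ v + u) := by
    rw [abs_sub_comm, add_comm]
  simp only [hc]
  have h1 : ((u + v) ^ 2 - w ^ 2) * (w ^ 2 - (u - v) ^ 2) =
      ((v + u) ^ 2 - w ^ 2) * (w ^ 2 - (v - u) ^ 2) := by ring
  have h2 : u * v * w = v * u * w := by ring
  rw [h1, h2]

lemma bk_swap23 (α u v w : ℝ) : besselKernel α u v w = besselKernel α u w v := by
  unfold besselKernel
  have hc : (|u - v| ≤ w ∧ w ≤ u + v) ↔ (|u - w| ≤ v ∧ v ≤ u + w) := by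
    simp only [abs_le]
    constructor <;> rintro ⟨⟨h1, h2⟩, h3⟩ <;>
      exact ⟨⟨by linarith, by linarith⟩, by linarith⟩
  simp only [hc]
  have h1 : ((u + v) ^ 2 - w ^ 2) * (w ^ 2 - (u - v) ^ 2) =
      ((u + w) ^ 2 - v ^ 2) * (v ^ 2 - (u - w) ^ 2) := by ring
  have h2 : u * v * w = u * w * v := by ring
  rw [h1, h2]

lemma bk_swap13 (α u v w : ℝ) : besselKernel α u v w = besselKernel α w v u := by
  rw [bk_swap12, bk_swap23, bk_swap12]

lemma sigmaP_swap (n : ℕ) (x y z : ℝ) : sigmaP n x y z = sigmaP n y x z := by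
  unfold sigmaP; rw [mul_comm x y]; ring_nf

lemma sigmaP_neg₁ (n : ℕ) (x y z : ℝ) : sigmaP n (-x) y z = sigmaP n x y z := by
  simp [sigmaP, neg_mul]

lemma sigmaP_neg₂ (n : ℕ) (x y z : ℝ) : sigmaP n x (-y) z = sigmaP n x y z := by
  simp [sigmaP, mul_neg]

lemma sigmaP_neg₃ (n : ℕ) (x y z : ℝ) : sigmaP n x y (-z) = sigmaP n x y z := by
  simp [sigmaP]

lemma xiP_swap (κ : ℝ) (n : ℕ) (x y z : ℝ) : xiP κ n x y z = xiP κ n y x z := by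
  unfold xiP; rw [sigmaP_swap, mul_comm x y]

lemma xiP_neg₁ (κ : ℝ) (n : ℕ) (x y z : ℝ) : xiP κ n (-x) y z = -xiP κ n x y z := by
  unfold xiP; rw [sigmaP_neg₁, neg_mul, Real.sign_neg]; ring

lemma xiP_neg₂ (κ : ℝ) (n : ℕ) (x y z : ℝ) : xiP κ n x (-y) z = -xiP κ n x y z := by
  unfold xiP; rw [sigmaP_neg₂, mul_neg, Real.sign_neg]; ring

lemma xiP_neg₃ (κ : ℝ) (n : ℕ) (x y z : ℝ) : xiP κ n x y (-z) = xiP κ n x y z := by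
  unfold xiP; rw [sigmaP_neg₃]

/-- symmetry relations for the kernel `𝒦_{κ,n}`. -/
theorem statement9 (n : ℕ) (hn : 1 ≤ n) (κ : ℝ) (hκ : ((n : ℝ) - 1) / (2 * n) < κ)
    (x y z : ℝ) (hx : x ≠ 0) (hy : y ≠ 0) (hz : z ≠ 0) :
    Kcal κ n x y z = Kcal κ n y x z ∧
    Kcal κ n x y z = Kcal κ n ((-1) ^ n * x) z y ∧
    Kcal κ n x y z = Kcal κ n z ((-1) ^ n * y) x := by
  refine ⟨?_, ?_, ?_⟩
  · unfold Kcal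
    rw [bk_swap12 _ (|x| ^ (1 / (n : ℝ))), xiP_swap κ n y x z, xiP_swap κ n z y x,
      xiP_swap κ n x z y]
    ring
  · rcases Nat.even_or_odd n with h | h
    · rw [h.neg_one_pow, one_mul]
      unfold Kcal
      rw [bk_swap23 _ (|x| ^ (1 / (n : ℝ))), h.neg_one_pow, xiP_swap κ n x z y,
        xiP_swap κ n y x z, xiP_swap κ n z y x]
      ring
    · rw [h.neg_one_pow, neg_one_mul]
      unfold Kcal
      rw [bk_swap23 _ (|x| ^ (1 / (n : ℝ))), h.neg_one_pow, abs_neg,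
        xiP_neg₁ κ n x z y, xiP_neg₂ κ n y x z, xiP_neg₃ κ n z y x,
        xiP_swap κ n x z y, xiP_swap κ n y x z, xiP_swap κ n z y x]
      ring
  · rcases Nat.even_or_odd n with h | h
    · rw [h.neg_one_pow, one_mul]
      unfold Kcal
      rw [bk_swap13 _ (|x| ^ (1 / (n : ℝ))), h.neg_one_pow, xiP_swap κ n z y x,
        xiP_swap κ n x z y, xiP_swap κ n y x z]
      ring
    · rw [h.neg_one_pow, neg_one_mul]
      unfold Kcal
      rw [bk_swap13 _ (|x| ^ (1 / (n : ℝ))), h.neg_one_pow, abs_neg,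
        xiP_neg₂ κ n z y x, xiP_neg₃ κ n x z y, xiP_neg₁ κ n y x z,
        xiP_swap κ n z y x, xiP_swap κ n x z y, xiP_swap κ n y x z]
      ring

end Paper
end
end

section
/- Let n ∈ ℕ* and κ > (n−1)/(2n). For every λ ∈ ℝ and every y ∈ ℝ∖{0}, the generalized Hankel function B_λ^{κ,n} is an eigenfunction of the differential–reflection operator T^{κ,n} with eigenvalue −|λ|^{2/n}: T^{κ,n} B_λ^{κ,n}(y) = −|λ|^{2/n} B_λ^{κ,n}(y), where T^{κ,n} f(x) = |x|^{2(1−1/n)} [ f''(x) + (2κ/x) f'(x) − (κ/x²)(f(x) − f(−x)) ]. -/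
/-!
The Bessel function `j_α(z)` is `F_α((z/2)^2)` for the entire series `F_α(u) = Σ c_k u^k`, which
solves `u F'' + (α + 1) F' + F = 0`. Substituting `u = c |x|^p` with `p (α + 1) = 2κ - 1 + p`
turns this into `|x|^(2-p) (g'' + (2κ/x) g') = -c p² g` for `g(x) = F_α(c |x|^p)`; with `p = 2/n`
and `c = (n/2)² |λ|^(2/n)` the eigenvalue is `-|λ|^(2/n)`. The even part of `B_λ^{κ,n}` is such a
`g` for `κ`, and the odd part is `x g(x)` with `g` for `κ + 1` (note `(κ+1)n - n/2 = κn + n/2`):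
on `x g(x)` the reflection term of `T^{κ,n}` cancels the first-order term `2κ g / x`, leaving `x`
times the operator with parameter `κ + 1` applied to `g`.
-/

open MeasureTheory Real Set
open scoped ENNReal

noncomputable section

namespace Paper

open Filter Topology
open scoped Nat

def powSeries (d : ℕ → ℝ) (u : ℝ) : ℝ := ∑' k, d k * u ^ k

def derivCoeff (d : ℕ → ℝ) (k : ℕ) : ℝ := (k + 1) * d (k + 1)

section PowSeries

variable {d : ℕ → ℝ} {M : ℝ}

lemma summable_mul_pow_of_abs_le {q : ℝ} (hd : ∀ k, |d k| ≤ M * q ^ k / k !) (u : ℝ) :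
    Summable fun k => d k * u ^ k := by
  refine Summable.of_norm_bounded (g := fun k => M * (q * |u|) ^ k / k !)
    (((Real.summable_pow_div_factorial (q * |u|)).mul_left M).congr fun k => by ring) fun k => ?_
  rw [norm_mul, norm_pow, Real.norm_eq_abs, Real.norm_eq_abs, mul_pow]
  calc |d k| * |u| ^ k ≤ M * q ^ k / k ! * |u| ^ k := by gcongr; exact hd k
    _ = M * (q ^ k * |u| ^ k) / k ! := by ring

lemma abs_derivCoeff_le (hd : ∀ k, |d k| ≤ M * 2 ^ k / k !) (k : ℕ) :
    |derivCoeff d k| ≤ 2 * M * 2 ^ k / k ! := by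
  calc |derivCoeff d k| = (k + 1) * |d (k + 1)| := by
        rw [derivCoeff, abs_mul, abs_of_pos (by positivity)]
    _ ≤ (k + 1) * (M * 2 ^ (k + 1) / (k + 1)!) := by gcongr; exact hd _
    _ = 2 * M * 2 ^ k / k ! := by
        rw [Nat.factorial_succ]; push_cast; field_simp; ring

lemma norm_mul_deriv_pow_le (hd : ∀ k, |d k| ≤ M * 2 ^ k / k !) {R y : ℝ} (hR : 1 ≤ R)
    (hy : |y| ≤ R) (k : ℕ) : ‖d k * (k * y ^ (k - 1))‖ ≤ M * (4 * R) ^ k / k ! := by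
  have hM : 0 ≤ M := by simpa using (abs_nonneg (d 0)).trans (hd 0)
  have hk : (k : ℝ) ≤ 2 ^ k := by exact_mod_cast k.lt_two_pow_self.le
  have hyk : |y| ^ (k - 1) ≤ R ^ k :=
    (pow_le_pow_left₀ (abs_nonneg _) hy _).trans (pow_le_pow_right₀ hR (Nat.sub_le k 1))
  calc ‖d k * (k * y ^ (k - 1))‖ = |d k| * (k * |y| ^ (k - 1)) := by simp
    _ ≤ M * 2 ^ k / k ! * (2 ^ k * R ^ k) := by gcongr; exact hd k
    _ = M * (4 * R) ^ k / k ! := by rw [show (4 : ℝ) = 2 * 2 by norm_num, mul_pow, mul_pow]; ring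

theorem hasDerivAt_powSeries (hd : ∀ k, |d k| ≤ M * 2 ^ k / k !) (u : ℝ) :
    HasDerivAt (powSeries d) (powSeries (derivCoeff d) u) u := by
  set R := |u| + 1
  have hR : 1 ≤ R := by simp [R]
  have hu : u ∈ Metric.ball (0 : ℝ) R := by simp [R]
  have hderiv : HasDerivAt (fun t => ∑' k, d k * t ^ k) (∑' k, d k * (k * u ^ (k - 1))) u :=
    hasDerivAt_tsum_of_isPreconnected (g := fun k t => d k * t ^ k)
      (g' := fun k t => d k * (k * t ^ (k - 1))) (t := Metric.ball 0 R)
      (((Real.summable_pow_div_factorial (4 * R)).mul_left M).congr fun k => by ring)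
      Metric.isOpen_ball (convex_ball _ _).isPreconnected
      (fun k t _ => (hasDerivAt_pow k t).const_mul (d k))
      (fun k t ht => norm_mul_deriv_pow_le hd hR (by simpa using (Metric.mem_ball.mp ht).le) k)
      hu (summable_mul_pow_of_abs_le hd u) hu
  have hshift : Summable fun k : ℕ => d (k + 1) * ((k + 1 : ℕ) * u ^ (k + 1 - 1)) :=
    (summable_mul_pow_of_abs_le (abs_derivCoeff_le hd) u).congr fun k => by
      simp only [derivCoeff, Nat.add_sub_cancel]; push_cast; ring
  rw [tsum_eq_zero_add' (f := fun k : ℕ => d k * (k * u ^ (k - 1))) hshift] at hderiv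
  refine hderiv.congr_deriv ?_
  simp only [powSeries, derivCoeff, Nat.add_sub_cancel, Nat.cast_zero, zero_mul, mul_zero, zero_add]
  exact tsum_congr fun k => by push_cast; ring

end PowSeries

def besselCoeff (α : ℝ) (k : ℕ) : ℝ :=
  (-1) ^ k * Real.Gamma (α + 1) / (k ! * Real.Gamma (α + k + 1))

section BesselSeries

variable {α : ℝ}

lemma besselCoeff_zero (hα : -1 < α) : besselCoeff α 0 = 1 := by
  have : Real.Gamma (α + 1) ≠ 0 := (Real.Gamma_pos_of_pos (by linarith)).ne'
  simp [besselCoeff, this]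

lemma succ_mul_add_mul_besselCoeff_succ (hα : -1 < α) (k : ℕ) :
    (k + 1) * (α + k + 1) * besselCoeff α (k + 1) = -besselCoeff α k := by
  have hpos : 0 < α + k + 1 := by linarith [(k.cast_nonneg : (0 : ℝ) ≤ k)]
  have hΓ : Real.Gamma (α + ↑(k + 1) + 1) = (α + k + 1) * Real.Gamma (α + k + 1) := by
    rw [Nat.cast_succ, show α + (k + 1) + 1 = α + k + 1 + 1 by ring, Real.Gamma_add_one hpos.ne']
  have : Real.Gamma (α + k + 1) ≠ 0 := (Real.Gamma_pos_of_pos hpos).ne'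
  rw [besselCoeff, besselCoeff, hΓ, Nat.factorial_succ]
  push_cast
  field_simp
  ring

lemma abs_besselCoeff_le (hα : -(1 / 2) < α) (k : ℕ) : |besselCoeff α k| ≤ 1 * 2 ^ k / k ! := by
  induction k with
  | zero => simp [besselCoeff_zero (by linarith : -1 < α)]
  | succ k ih =>
    have hrec := succ_mul_add_mul_besselCoeff_succ (by linarith : -1 < α) k
    have hmul : (k + 1) / 2 * |besselCoeff α (k + 1)| ≤ 1 * 2 ^ k / k ! :=
      calc (k + 1) / 2 * |besselCoeff α (k + 1)|
          ≤ ((k : ℝ) + 1) * (α + k + 1) * |besselCoeff α (k + 1)| := by gcongr; nlinarith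
        _ = |besselCoeff α k| := by
          rw [← abs_neg (besselCoeff α k), ← hrec, abs_mul,
            abs_of_pos (by nlinarith : (0 : ℝ) < ((k : ℝ) + 1) * (α + k + 1))]
        _ ≤ _ := ih
    calc |besselCoeff α (k + 1)| = 2 / (k + 1) * ((k + 1) / 2 * |besselCoeff α (k + 1)|) := by
          field_simp
      _ ≤ 2 / (k + 1) * (1 * 2 ^ k / k !) := by gcongr
      _ = 1 * 2 ^ (k + 1) / (k + 1)! := by rw [Nat.factorial_succ]; push_cast; field_simp; ring

theorem besselSeries_ode (hα : -(1 / 2) < α) (u : ℝ) :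
    u * powSeries (derivCoeff (derivCoeff (besselCoeff α))) u
      + (α + 1) * powSeries (derivCoeff (besselCoeff α)) u + powSeries (besselCoeff α) u = 0 := by
  have hc := abs_besselCoeff_le hα
  have hsum0 := (summable_mul_pow_of_abs_le hc u).hasSum
  have hsum1 := (summable_mul_pow_of_abs_le (abs_derivCoeff_le hc) u).hasSum
  have hsum2 := (summable_mul_pow_of_abs_le (abs_derivCoeff_le (abs_derivCoeff_le hc)) u).hasSum
  have hsum2' : HasSum (fun k : ℕ => k * derivCoeff (besselCoeff α) k * u ^ k)
      (u * powSeries (derivCoeff (derivCoeff (besselCoeff α))) u) := by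
    refine (hasSum_nat_add_iff' 1).mp ?_
    simp only [Finset.sum_range_one, Nat.cast_zero, zero_mul, sub_zero]
    have hterm :
        (fun k : ℕ => ((k + 1 : ℕ) : ℝ) * derivCoeff (besselCoeff α) (k + 1) * u ^ (k + 1))
          = fun k => u * (derivCoeff (derivCoeff (besselCoeff α)) k * u ^ k) := by
      funext k
      simp only [derivCoeff]
      push_cast
      ring
    rw [hterm]
    exact hsum2.mul_left u
  have hsum := (hsum2'.add (hsum1.mul_left (α + 1))).add hsum0
  have hzero : (fun k : ℕ => k * derivCoeff (besselCoeff α) k * u ^ k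
      + (α + 1) * (derivCoeff (besselCoeff α) k * u ^ k) + besselCoeff α k * u ^ k) = 0 := by
    funext k
    have := succ_mul_add_mul_besselCoeff_succ (by linarith : -1 < α) k
    simp only [derivCoeff, Pi.zero_apply]
    linear_combination u ^ k * this
  rw [hzero] at hsum
  exact hsum.unique hasSum_zero

lemma besselJ_eq_powSeries (α z : ℝ) : besselJ α z = powSeries (besselCoeff α) ((z / 2) ^ 2) := by
  rw [besselJ, powSeries, ← tsum_mul_left]
  exact tsum_congr fun k => by rw [besselCoeff, pow_mul]; ring

end BesselSeries

def IsWeightedBesselEigenfunction (κ q Λ : ℝ) (g : ℝ → ℝ) : Prop :=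
  ∃ g' g'' : ℝ → ℝ, (∀ x ≠ 0, HasDerivAt g (g' x) x) ∧ (∀ x ≠ 0, HasDerivAt g' (g'' x) x) ∧
    ∀ x ≠ 0, |x| ^ q * (g'' x + 2 * κ / x * g' x) = -Λ * g x

lemma hasDerivAt_abs_rpow_of_ne_zero (p : ℝ) {x : ℝ} (hx : x ≠ 0) :
    HasDerivAt (fun t => |t| ^ p) (p * |x| ^ p / x) x := by
  refine ((hasDerivAt_abs hx).rpow_const (p := p) (Or.inl (abs_ne_zero.2 hx))).congr_deriv ?_
  rw [Real.rpow_sub_one (abs_ne_zero.2 hx)]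
  rcases hx.lt_or_gt with hneg | hpos
  · simp [hneg, abs_of_neg hneg]; field_simp
  · simp [hpos, abs_of_pos hpos]; field_simp

theorem isWeightedBesselEigenfunction_comp_mul_abs_rpow {G G' G'' : ℝ → ℝ} {γ κ p : ℝ}
    (hG : ∀ u, HasDerivAt G (G' u) u) (hG' : ∀ u, HasDerivAt G' (G'' u) u)
    (hode : ∀ u, u * G'' u + (γ + 1) * G' u + G u = 0) (hγ : p * (γ + 1) = 2 * κ - 1 + p)
    (c : ℝ) :
    IsWeightedBesselEigenfunction κ (2 - p) (c * p ^ 2) fun x => G (c * |x| ^ p) := by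
  refine ⟨fun x => G' (c * |x| ^ p) * (c * (p * |x| ^ p / x)),
    fun x => G'' (c * |x| ^ p) * (c * (p * |x| ^ p / x)) ^ 2
      + G' (c * |x| ^ p) * (c * (p * (p - 1) * |x| ^ p / x ^ 2)),
    fun x hx => (hG _).comp x ((hasDerivAt_abs_rpow_of_ne_zero p hx).const_mul c),
    fun x hx => ?_, fun x hx => ?_⟩
  · have hquot : HasDerivAt (fun t => p * |t| ^ p / t) (p * (p - 1) * |x| ^ p / x ^ 2) x := by
      refine (((hasDerivAt_abs_rpow_of_ne_zero p hx).const_mul p).div (hasDerivAt_id' x)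
        hx).congr_deriv ?_
      field_simp
    refine (((hG' _).comp x ((hasDerivAt_abs_rpow_of_ne_zero p hx).const_mul c)).mul
      (hquot.const_mul c)).congr_deriv ?_
    simp only [Function.comp_apply]
    ring
  · have hv : 0 < |x| ^ p := Real.rpow_pos_of_pos (abs_pos.2 hx) p
    have hweight : |x| ^ (2 - p) = x ^ 2 / |x| ^ p := by
      rw [Real.rpow_sub (abs_pos.2 hx), Real.rpow_two, sq_abs]
    set w := c * |x| ^ p
    have hexpand : |x| ^ (2 - p) * (G'' w * (c * (p * |x| ^ p / x)) ^ 2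
        + G' w * (c * (p * (p - 1) * |x| ^ p / x ^ 2))
        + 2 * κ / x * (G' w * (c * (p * |x| ^ p / x))))
        = c * p ^ 2 * (w * G'' w) + c * p * (p - 1 + 2 * κ) * G' w := by
      rw [hweight]
      field_simp
      ring
    rw [hexpand]
    linear_combination c * p ^ 2 * hode w - c * p * G' w * hγ

lemma Top_eq_of_hasDerivAt {κ : ℝ} {n : ℕ} {f f' : ℝ → ℂ} {f'' : ℂ} {y : ℝ}
    (hf : ∀ᶠ x in 𝓝 y, HasDerivAt f (f' x) x) (hf' : HasDerivAt f' f'' y) :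
    Top κ n f y = ((|y| ^ (2 * (1 - 1 / (n : ℝ))) : ℝ) : ℂ) *
      (f'' + ((2 * κ / y : ℝ) : ℂ) * f' y - ((κ / y ^ 2 : ℝ) : ℂ) * (f y - f (-y))) := by
  have hderiv : deriv f =ᶠ[𝓝 y] f' := hf.mono fun x hx => hx.deriv
  rw [Top, hderiv.deriv_eq, hf'.deriv, hf.self_of_nhds.deriv]

theorem Top_apply_of_isWeightedBesselEigenfunction {κ Λ : ℝ} {n : ℕ} {e o : ℝ → ℝ}
    (he : IsWeightedBesselEigenfunction κ (2 * (1 - 1 / (n : ℝ))) Λ e)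
    (ho : IsWeightedBesselEigenfunction (κ + 1) (2 * (1 - 1 / (n : ℝ))) Λ o)
    (he_even : ∀ x, e (-x) = e x) (ho_even : ∀ x, o (-x) = o x) (K : ℂ) {y : ℝ} (hy : y ≠ 0) :
    Top κ n (fun x => (e x : ℂ) + K * (x * o x)) y = -(Λ : ℂ) * (e y + K * (y * o y)) := by
  obtain ⟨e', e'', he', he'', he_eq⟩ := he
  obtain ⟨o', o'', ho', ho'', ho_eq⟩ := ho
  have hid : ∀ x : ℝ, HasDerivAt (fun t : ℝ => (t : ℂ)) 1 x := fun x => by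
    simpa using (hasDerivAt_id x).ofReal_comp
  have hderiv : ∀ x ≠ 0, HasDerivAt (fun x => (e x : ℂ) + K * (x * o x))
      (e' x + K * (o x + x * o' x)) x := fun x hx =>
    ((he' x hx).ofReal_comp.add (((hid x).mul (ho' x hx).ofReal_comp).const_mul K)).congr_deriv
      (by ring)
  have hderiv2 : HasDerivAt (fun x => (e' x : ℂ) + K * (o x + x * o' x))
      (e'' y + K * (o' y + (o' y + y * o'' y))) y :=
    ((he'' y hy).ofReal_comp.add (((ho' y hy).ofReal_comp.add
      ((hid y).mul (ho'' y hy).ofReal_comp)).const_mul K)).congr_deriv (by ring)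
  rw [Top_eq_of_hasDerivAt ((eventually_ne_nhds hy).mono hderiv) hderiv2, he_even, ho_even]
  have he_y := congrArg Complex.ofReal (he_eq y hy)
  have ho_y := congrArg Complex.ofReal (ho_eq y hy)
  have hy' : (y : ℂ) ≠ 0 := by exact_mod_cast hy
  push_cast at he_y ho_y ⊢
  field_simp at he_y ho_y ⊢
  linear_combination (y : ℂ) * he_y + K * (y : ℂ) ^ 2 * ho_y

lemma genHankel_eq_powSeries (κ : ℝ) (n : ℕ) (lam x : ℝ) :
    genHankel κ n lam x =
      (powSeries (besselCoeff (κ * n - n / 2))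
          ((n / 2) ^ 2 * |lam| ^ (2 / (n : ℝ)) * |x| ^ (2 / (n : ℝ))) : ℂ)
      + (-Complex.I) ^ n * ((n : ℂ) / 2) ^ n *
          ((Real.Gamma (κ * n - n / 2 + 1) / Real.Gamma (κ * n + n / 2 + 1) : ℝ) : ℂ) * lam *
        (x * powSeries (besselCoeff (κ * n + n / 2))
          ((n / 2) ^ 2 * |lam| ^ (2 / (n : ℝ)) * |x| ^ (2 / (n : ℝ)))) := by
  have harg : ((n * |lam * x| ^ (1 / (n : ℝ))) / 2) ^ 2
      = (n / 2) ^ 2 * |lam| ^ (2 / (n : ℝ)) * |x| ^ (2 / (n : ℝ)) := by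
    rw [div_pow, mul_pow, ← Real.rpow_natCast (|lam * x| ^ _), ← Real.rpow_mul (abs_nonneg _),
      abs_mul, Real.mul_rpow (abs_nonneg _) (abs_nonneg _)]
    push_cast
    ring_nf
  rw [genHankel, besselJ_eq_powSeries, besselJ_eq_powSeries, harg]
  push_cast
  ring

/-- `B_λ^{κ,n}` is an eigenfunction of the differential–reflection
operator `T^{κ,n}` with eigenvalue `−|λ|^{2/n}`. -/
theorem statement19 (n : ℕ) (hn : 1 ≤ n) (κ : ℝ) (hκ : ((n : ℝ) - 1) / (2 * n) < κ)
    (lam y : ℝ) (hy : y ≠ 0) :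
    Top κ n (genHankel κ n lam) y =
      -(((|lam| ^ (2 / (n : ℝ)) : ℝ) : ℂ)) * genHankel κ n lam y := by
  have hα : -(1 / 2) < κ * n - n / 2 := by
    rw [div_lt_iff₀ (by positivity)] at hκ
    linarith
  have hβ : -(1 / 2) < κ * n + n / 2 := by linarith [(n.cast_nonneg : (0 : ℝ) ≤ n)]
  set c := (n / 2) ^ 2 * |lam| ^ (2 / (n : ℝ))
  have heven := isWeightedBesselEigenfunction_comp_mul_abs_rpow (κ := κ) (p := 2 / n)
    (hasDerivAt_powSeries (abs_besselCoeff_le hα))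
    (hasDerivAt_powSeries (abs_derivCoeff_le (abs_besselCoeff_le hα)))
    (besselSeries_ode hα) (by field_simp) c
  have hodd := isWeightedBesselEigenfunction_comp_mul_abs_rpow (κ := κ + 1) (p := 2 / n)
    (hasDerivAt_powSeries (abs_besselCoeff_le hβ))
    (hasDerivAt_powSeries (abs_derivCoeff_le (abs_besselCoeff_le hβ)))
    (besselSeries_ode hβ) (by field_simp; ring) c
  rw [show 2 - 2 / (n : ℝ) = 2 * (1 - 1 / n) by ring,
    show c * (2 / (n : ℝ)) ^ 2 = |lam| ^ (2 / (n : ℝ)) by field_simp; ring] at heven hodd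
  have hB : genHankel κ n lam = _ := funext (genHankel_eq_powSeries κ n lam)
  rw [hB]
  exact Top_apply_of_isWeightedBesselEigenfunction heven hodd (by simp) (by simp) _ hy

end Paper
end
end
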